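/- arXiv:2008.03326 — 6 statements merged into one kernel-verified Lean document; each statement's English description precedes it below -/
import Mathlib

section
/- Let ρ_L, ρ_s, q be real numbers with |q| < 1, and define F : ℝ → ℝ by F(θ) = (θ ρ_L + ρ_s) / √(1 + θ² + 2θq). Set R = √((ρ_s² + ρ_L² − 2q ρ_L ρ_s)/(1 − q²)). Then: (i) for every θ ∈ ℝ, |F(θ)| ≤ R; (ii) ρ_L² ≤ R² and ρ_s² ≤ R² (so the bound also dominates the limiting values of |F| at θ → ±∞ and at θ = 0); and (iii) if ρ_s ≠ ρ_L q, then for θ* = (ρ_L − ρ_s q)/(ρ_s − ρ_L q) one has F(θ*)² = R², i.e. the bound R is attained in absolute value at θ*. -/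
/-!
Up to the factor `1 - q²`, the gap `R² (1 + θ² + 2θq) - (θρ_L + ρ_s)²` is the perfect square
`(θ(ρ_s - ρ_L q) - (ρ_L - ρ_s q))²` (Cauchy–Schwarz for the Gram matrix `[[1, q], [q, 1]]`),
so it is nonnegative and vanishes exactly at `θ*`. The bounds `ρ_L² ≤ R²` and `ρ_s² ≤ R²` come
from the analogous squares `(ρ_s - qρ_L)²` and `(ρ_L - qρ_s)²`.
-/

namespace CombinedCorrelation

variable {ρL ρs q : ℝ}

lemma one_sub_sq_pos (hq : |q| < 1) : 0 < 1 - q ^ 2 :=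
  sub_pos.mpr ((sq_lt_one_iff_abs_lt_one q).mpr hq)

lemma one_add_sq_add_two_mul_pos (hq : |q| < 1) (θ : ℝ) : 0 < 1 + θ ^ 2 + 2 * θ * q := by
  nlinarith [sq_nonneg (θ + q), one_sub_sq_pos hq]

lemma gap_eq_sq (ρL ρs q θ : ℝ) :
    (ρs ^ 2 + ρL ^ 2 - 2 * q * ρL * ρs) * (1 + θ ^ 2 + 2 * θ * q)
      - (θ * ρL + ρs) ^ 2 * (1 - q ^ 2) = (θ * (ρs - ρL * q) - (ρL - ρs * q)) ^ 2 := by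
  ring

lemma sq_div_le (hq : |q| < 1) (θ : ℝ) :
    (θ * ρL + ρs) ^ 2 / (1 + θ ^ 2 + 2 * θ * q)
      ≤ (ρs ^ 2 + ρL ^ 2 - 2 * q * ρL * ρs) / (1 - q ^ 2) := by
  rw [div_le_div_iff₀ (one_add_sq_add_two_mul_pos hq θ) (one_sub_sq_pos hq)]
  linarith [gap_eq_sq ρL ρs q θ, sq_nonneg (θ * (ρs - ρL * q) - (ρL - ρs * q))]

lemma sq_div_eq_of_ne (hq : |q| < 1) (h : ρs ≠ ρL * q) :
    ((ρL - ρs * q) / (ρs - ρL * q) * ρL + ρs) ^ 2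
        / (1 + ((ρL - ρs * q) / (ρs - ρL * q)) ^ 2 + 2 * ((ρL - ρs * q) / (ρs - ρL * q)) * q)
      = (ρs ^ 2 + ρL ^ 2 - 2 * q * ρL * ρs) / (1 - q ^ 2) := by
  set θ := (ρL - ρs * q) / (ρs - ρL * q)
  have hθ : θ * (ρs - ρL * q) = ρL - ρs * q := div_mul_cancel₀ _ (sub_ne_zero.mpr h)
  have hgap := gap_eq_sq ρL ρs q θ
  rw [hθ, sub_self, zero_pow two_ne_zero] at hgap
  rw [div_eq_div_iff (one_add_sq_add_two_mul_pos hq θ).ne' (one_sub_sq_pos hq).ne']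
  linarith

lemma sq_le_div (hq : |q| < 1) (a b : ℝ) :
    a ^ 2 ≤ (a ^ 2 + b ^ 2 - 2 * q * b * a) / (1 - q ^ 2) := by
  rw [le_div_iff₀ (one_sub_sq_pos hq)]
  nlinarith [sq_nonneg (b - q * a)]

end CombinedCorrelation

open CombinedCorrelation in
/-- Properties of the correlation `F(θ)` of the linear combination
`θ·x̄^L + x̂^s`: it is bounded in absolute value by
`R = √((ρ_s² + ρ_L² − 2q ρ_L ρ_s)/(1 − q²))`, the bound dominates the limiting
values `ρ_L²` and `ρ_s²`, and (when `ρ_s ≠ ρ_L q`) it is attained at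
`θ* = (ρ_L − ρ_s q)/(ρ_s − ρ_L q)`. -/
theorem combined_correlation_bound (ρL ρs q : ℝ) (hq : |q| < 1)
    (F : ℝ → ℝ)
    (hF : ∀ θ : ℝ, F θ = (θ * ρL + ρs) / Real.sqrt (1 + θ ^ 2 + 2 * θ * q))
    (R : ℝ)
    (hR : R = Real.sqrt ((ρs ^ 2 + ρL ^ 2 - 2 * q * ρL * ρs) / (1 - q ^ 2))) :
    (∀ θ : ℝ, |F θ| ≤ R) ∧
    ρL ^ 2 ≤ R ^ 2 ∧ ρs ^ 2 ≤ R ^ 2 ∧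
    (ρs ≠ ρL * q → (F ((ρL - ρs * q) / (ρs - ρL * q))) ^ 2 = R ^ 2) := by
  have hR2 : R ^ 2 = (ρs ^ 2 + ρL ^ 2 - 2 * q * ρL * ρs) / (1 - q ^ 2) := by
    rw [hR, Real.sq_sqrt ((sq_le_div hq ρs ρL).trans' (sq_nonneg ρs))]
  have hF2 (θ : ℝ) : F θ ^ 2 = (θ * ρL + ρs) ^ 2 / (1 + θ ^ 2 + 2 * θ * q) := by
    rw [hF, div_pow, Real.sq_sqrt (one_add_sq_add_two_mul_pos hq θ).le]
  refine ⟨fun θ => abs_le_of_sq_le_sq ?_ (hR ▸ Real.sqrt_nonneg _), ?_, ?_, fun h => ?_⟩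
  · rw [hF2, hR2]
    exact sq_div_le hq θ
  · rw [hR2]
    convert sq_le_div hq ρL ρs using 2
    ring
  · rw [hR2]
    exact sq_le_div hq ρs ρL
  · rw [hF2, hR2]
    exact sq_div_eq_of_ne hq h
end

section
/- Let ρ_L ∈ ℝ and ρ_s ≥ 0 with (ρ_L, ρ_s) ≠ (0,0), and let q ∈ ℝ with |q| < 1. Define ρ_max = max(|ρ_L|, ρ_s) and p = ρ_s/ρ_L if |ρ_L| ≥ ρ_s, and p = ρ_L/ρ_s otherwise. Then the identity √((ρ_s² + ρ_L² − 2q ρ_L ρ_s)/(1 − q²)) = ρ_max · √(1 + (p − q)²/(1 − q²)) holds; consequently, if in addition q ≠ p, then √((ρ_s² + ρ_L² − 2q ρ_L ρ_s)/(1 − q²)) > ρ_max, i.e. the optimal linear combination of the two estimators strictly improves on the better of the two individual asymptotic correlations. -/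
/-!
Whichever of `ρ_L`, `ρ_s` has the larger modulus, call it `a` and the other `b`, so that
`ρ_max = |a|` and `p = b / a`. Completing the square in `b` gives
`a² + b² − 2qab = a² ((1 − q²) + (b/a − q)²)`, and the identity follows by dividing by `1 − q² > 0`
and taking square roots; the second factor exceeds `1` exactly when `b / a ≠ q`.
-/

theorem sq_add_sq_sub_two_mul_eq_sq_mul {a : ℝ} (b q : ℝ) (ha : a ≠ 0) :
    a ^ 2 + b ^ 2 - 2 * q * a * b = a ^ 2 * ((1 - q ^ 2) + (b / a - q) ^ 2) := by
  field_simp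
  ring

theorem sqrt_div_one_sub_sq_eq_abs_mul {a : ℝ} (b : ℝ) {q : ℝ} (ha : a ≠ 0) (hq : |q| < 1) :
    √((a ^ 2 + b ^ 2 - 2 * q * a * b) / (1 - q ^ 2))
      = |a| * √(1 + (b / a - q) ^ 2 / (1 - q ^ 2)) := by
  have hq2 : 0 < 1 - q ^ 2 := by nlinarith [abs_lt.mp hq]
  rw [sq_add_sq_sub_two_mul_eq_sq_mul b q ha, mul_div_assoc, add_div, div_self hq2.ne',
    Real.sqrt_mul (sq_nonneg a), Real.sqrt_sq_eq_abs]

theorem abs_lt_sqrt_div_one_sub_sq {a b q : ℝ} (ha : a ≠ 0) (hq : |q| < 1) (hqb : q ≠ b / a) :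
    |a| < √((a ^ 2 + b ^ 2 - 2 * q * a * b) / (1 - q ^ 2)) := by
  have hq2 : 0 < 1 - q ^ 2 := by nlinarith [abs_lt.mp hq]
  have hgain : 0 < (b / a - q) ^ 2 / (1 - q ^ 2) :=
    div_pos (pow_two_pos_of_ne_zero (sub_ne_zero.mpr hqb.symm)) hq2
  have hsqrt : 1 < √(1 + (b / a - q) ^ 2 / (1 - q ^ 2)) :=
    Real.lt_sqrt_of_sq_lt (by linarith)
  rw [sqrt_div_one_sub_sq_eq_abs_mul b ha hq]
  exact lt_mul_of_one_lt_right (abs_pos.mpr ha) hsqrt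

theorem exists_dominant_ratio {ρL ρs : ℝ} (q : ℝ) (hρs : 0 ≤ ρs) (hρ : ¬(ρL = 0 ∧ ρs = 0)) :
    ∃ a b : ℝ, a ≠ 0 ∧ max |ρL| ρs = |a|
      ∧ (if ρs ≤ |ρL| then ρs / ρL else ρL / ρs) = b / a
      ∧ ρs ^ 2 + ρL ^ 2 - 2 * q * ρL * ρs = a ^ 2 + b ^ 2 - 2 * q * a * b := by
  by_cases hc : ρs ≤ |ρL|
  · have hL : ρL ≠ 0 := by
      rintro rfl
      exact hρ ⟨rfl, le_antisymm (by simpa using hc) hρs⟩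
    exact ⟨ρL, ρs, hL, max_eq_left hc, if_pos hc, by ring⟩
  · have hs : 0 < ρs := (abs_nonneg ρL).trans_lt (not_le.mp hc)
    refine ⟨ρs, ρL, hs.ne', ?_, if_neg hc, by ring⟩
    rw [abs_of_pos hs, max_eq_right (not_le.mp hc).le]

/-- The asymptotic correlation of the optimal linear combination equals
`ρ_max · √(1 + (p − q)²/(1 − q²))`, and hence strictly exceeds
`ρ_max = max(|ρ_L|, ρ_s)` whenever `|q| < 1` and `q ≠ p`. -/
theorem optimal_linear_combination_gain (ρL ρs q : ℝ)
    (hρs : 0 ≤ ρs) (hρ : ¬(ρL = 0 ∧ ρs = 0)) (hq : |q| < 1)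
    (ρmax p : ℝ)
    (hmax : ρmax = max |ρL| ρs)
    (hp : p = if ρs ≤ |ρL| then ρs / ρL else ρL / ρs) :
    Real.sqrt ((ρs ^ 2 + ρL ^ 2 - 2 * q * ρL * ρs) / (1 - q ^ 2))
        = ρmax * Real.sqrt (1 + (p - q) ^ 2 / (1 - q ^ 2)) ∧
    (q ≠ p →
      ρmax < Real.sqrt ((ρs ^ 2 + ρL ^ 2 - 2 * q * ρL * ρs) / (1 - q ^ 2))) := by
  obtain ⟨a, b, ha, hmax', hp', hnum⟩ := exists_dominant_ratio q hρs hρ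
  rw [hmax, hmax', hp, hp', hnum]
  exact ⟨sqrt_div_one_sub_sq_eq_abs_mul b ha hq, abs_lt_sqrt_div_one_sub_sq ha hq⟩
end

section
/- Let (Ω, 𝓕, P) be a probability space, let G : Ω → ℝ be a random variable whose law is the standard Gaussian N(0,1), and let Z : Ω → ℝ be a measurable random variable that is almost surely bounded (|Z| ≤ M a.s. for some M). Write c₁ = E[Z G²] − E[Z], c₂ = E[Z² G²], c₃ = E[Z²]. Assume E[Z(G² − 1)] > 0 (i.e. c₁ > 0) and δ > c₃/c₁² for a real δ > 0; set β̃² = δ c₁², μ̃ = √( β̃²(β̃² − c₃) / (β̃² + c₂ − c₃) ) and σ̃² = β̃² c₂ / (β̃² + c₂ − c₃). Define the state-evolution map T on pairs (μ, σ²) ∈ ℝ × [0,∞) with μ² + σ² > 0 by T(μ, σ²) = ( √δ · (μ/β) · c₁ , (μ² c₂ + σ² c₃)/β² ) where β = √(μ² + σ²). Then the fixed points of T in {(μ, σ²) ∈ ℝ × [0,∞) : μ² + σ² > 0} are exactly the three points (0, c₃), (μ̃, σ̃²), and (−μ̃, σ̃²). -/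
/-!
At a fixed point with `μ = 0` the second coordinate reads `σ² c₃ / σ² = σ²`, so `σ² = c₃`.
If `μ ≠ 0`, the first coordinate can be divided by `μ` and forces `β = √δ c₁`, i.e. the
fixed point lies on the circle `μ² + σ² = β̃²`. On that circle the second coordinate is the
linear equation `μ² (β̃² + c₂ - c₃) = β̃² (β̃² - c₃)`, whose solution is `μ² = μ̃²`,
`σ² = σ̃²`; the coefficient `β̃² + c₂ - c₃` is positive because `c₂ = E[Z²G²] ≥ 0`.
-/

open MeasureTheory ProbabilityTheory Function

section StateEvolution

noncomputable def stateEvolutionMap (δ c₁ c₂ c₃ : ℝ) (p : ℝ × ℝ) : ℝ × ℝ :=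
  (Real.sqrt δ * (p.1 / Real.sqrt (p.1 ^ 2 + p.2)) * c₁,
    (p.1 ^ 2 * c₂ + p.2 * c₃) / (p.1 ^ 2 + p.2))

variable {δ c₁ c₂ c₃ μ σ : ℝ}

theorem isFixedPt_stateEvolutionMap_zero_iff (hσ : 0 < σ) :
    IsFixedPt (stateEvolutionMap δ c₁ c₂ c₃) (0, σ) ↔ σ = c₃ := by
  simp [IsFixedPt, stateEvolutionMap, Prod.ext_iff, hσ.ne', eq_comm]

theorem sqrt_mul_div_sqrt_mul_eq_self_iff (hδ : 0 ≤ δ) (hc₁ : 0 < c₁) {s : ℝ}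
    (hμ : μ ≠ 0) (hs : 0 < s) :
    Real.sqrt δ * (μ / Real.sqrt s) * c₁ = μ ↔ s = δ * c₁ ^ 2 := by
  have hsqrt : Real.sqrt (δ * c₁ ^ 2) = Real.sqrt δ * c₁ := by
    rw [Real.sqrt_mul hδ, Real.sqrt_sq hc₁.le]
  rw [show Real.sqrt δ * (μ / Real.sqrt s) * c₁ = μ * (Real.sqrt δ * c₁ / Real.sqrt s) by ring,
    mul_eq_left₀ hμ, div_eq_one_iff_eq (Real.sqrt_pos.2 hs).ne', eq_comm, ← hsqrt,
    Real.sqrt_inj hs.le (by positivity)]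

theorem div_eq_iff_mul_eq_of_add_eq {β2 : ℝ} (hβ2 : 0 < β2) (hsum : μ ^ 2 + σ = β2) :
    (μ ^ 2 * c₂ + σ * c₃) / β2 = σ ↔ μ ^ 2 * (β2 + c₂ - c₃) = β2 * (β2 - c₃) := by
  rw [div_eq_iff hβ2.ne']
  constructor <;> intro h
  · linear_combination h + (β2 - c₃) * hsum
  · linear_combination h - (β2 - c₃) * hsum

theorem isFixedPt_stateEvolutionMap_iff_of_ne_zero (hδ : 0 ≤ δ) (hc₁ : 0 < c₁) (hμ : μ ≠ 0)
    (hpos : 0 < μ ^ 2 + σ) :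
    IsFixedPt (stateEvolutionMap δ c₁ c₂ c₃) (μ, σ) ↔
      μ ^ 2 + σ = δ * c₁ ^ 2 ∧
        μ ^ 2 * (δ * c₁ ^ 2 + c₂ - c₃) = δ * c₁ ^ 2 * (δ * c₁ ^ 2 - c₃) := by
  rw [IsFixedPt, stateEvolutionMap, Prod.ext_iff,
    sqrt_mul_div_sqrt_mul_eq_self_iff hδ hc₁ hμ hpos]
  refine and_congr_right fun hsum => ?_
  rw [← div_eq_iff_mul_eq_of_add_eq (hsum ▸ hpos) hsum, hsum]

theorem add_eq_and_mul_eq_iff {β2 m : ℝ} (hD : 0 < β2 + c₂ - c₃) :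
    (m + σ = β2 ∧ m * (β2 + c₂ - c₃) = β2 * (β2 - c₃)) ↔
      m = β2 * (β2 - c₃) / (β2 + c₂ - c₃) ∧ σ = β2 * c₂ / (β2 + c₂ - c₃) := by
  rw [← eq_div_iff hD.ne', eq_div_iff hD.ne', eq_div_iff hD.ne']
  constructor
  · rintro ⟨hsum, hm⟩
    exact ⟨hm, by linear_combination (β2 + c₂ - c₃) * hsum - hm⟩
  · rintro ⟨hm, hσ⟩
    refine ⟨mul_right_cancel₀ hD.ne' ?_, hm⟩
    linear_combination hm + hσ

end StateEvolution

theorem state_evolution_fixed_points_general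
    {Ω : Type*} {mΩ : MeasurableSpace Ω} (P : Measure Ω)
    (G Z : Ω → ℝ)
    (c₁ c₂ c₃ : ℝ)
    (hc₂ : c₂ = ∫ ω, (Z ω) ^ 2 * (G ω) ^ 2 ∂P)
    (hc₁pos : 0 < c₁)
    (δ : ℝ) (hδpos : 0 < δ) (hδ : c₃ / c₁ ^ 2 < δ)
    (β2 μt σt2 : ℝ)
    (hβ2 : β2 = δ * c₁ ^ 2)
    (hμt : μt = Real.sqrt (β2 * (β2 - c₃) / (β2 + c₂ - c₃)))
    (hσt2 : σt2 = β2 * c₂ / (β2 + c₂ - c₃))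
    (T : ℝ × ℝ → ℝ × ℝ)
    (hT : T = fun p =>
      (Real.sqrt δ * (p.1 / Real.sqrt (p.1 ^ 2 + p.2)) * c₁,
       (p.1 ^ 2 * c₂ + p.2 * c₃) / (p.1 ^ 2 + p.2))) :
    ∀ μ σ2 : ℝ, 0 ≤ σ2 → 0 < μ ^ 2 + σ2 →
      (T (μ, σ2) = (μ, σ2) ↔
        (μ, σ2) = (0, c₃) ∨ (μ, σ2) = (μt, σt2) ∨ (μ, σ2) = (-μt, σt2)) := by
  intro μ σ2 _ hpos
  subst hT
  change IsFixedPt (stateEvolutionMap δ c₁ c₂ c₃) (μ, σ2) ↔ _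
  have hc₂nn : 0 ≤ c₂ := hc₂ ▸ integral_nonneg fun ω => by positivity
  have hc₃β2 : c₃ < β2 := hβ2 ▸ (div_lt_iff₀ (by positivity)).1 hδ
  have hD : 0 < β2 + c₂ - c₃ := by linarith
  have hradicand_pos : 0 < β2 * (β2 - c₃) / (β2 + c₂ - c₃) :=
    div_pos (mul_pos (hβ2 ▸ by positivity) (sub_pos.2 hc₃β2)) hD
  have hμt2 : μt ^ 2 = β2 * (β2 - c₃) / (β2 + c₂ - c₃) := hμt ▸ Real.sq_sqrt hradicand_pos.le
  simp only [Prod.mk.injEq]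
  rcases eq_or_ne μ 0 with rfl | hμ
  · have hμt0 : μt ≠ 0 := hμt ▸ (Real.sqrt_pos.2 hradicand_pos).ne'
    simp [isFixedPt_stateEvolutionMap_zero_iff (by simpa using hpos), hμt0, hμt0.symm]
  · subst hβ2
    rw [isFixedPt_stateEvolutionMap_iff_of_ne_zero hδpos.le hc₁pos hμ hpos,
      add_eq_and_mul_eq_iff hD, ← hμt2, ← hσt2, sq_eq_sq_iff_eq_or_eq_neg]
    simp [hμ, or_and_right]

/-- The fixed points of the state-evolution map `T` of the GAMP algorithm with
linear denoisers are exactly `(0, c₃)`, `(μ̃, σ̃²)` and `(−μ̃, σ̃²)`. -/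
theorem state_evolution_fixed_points
    {Ω : Type*} {mΩ : MeasurableSpace Ω} (P : Measure Ω) [IsProbabilityMeasure P]
    (G Z : Ω → ℝ) (hG : Measurable G) (hZ : Measurable Z)
    (hGlaw : Measure.map G P = gaussianReal 0 1)
    (hZbdd : ∃ M : ℝ, ∀ᵐ ω ∂P, |Z ω| ≤ M)
    (c₁ c₂ c₃ : ℝ)
    (hc₁ : c₁ = (∫ ω, Z ω * (G ω) ^ 2 ∂P) - ∫ ω, Z ω ∂P)
    (hc₂ : c₂ = ∫ ω, (Z ω) ^ 2 * (G ω) ^ 2 ∂P)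
    (hc₃ : c₃ = ∫ ω, (Z ω) ^ 2 ∂P)
    (hc₁pos : 0 < c₁)
    (δ : ℝ) (hδpos : 0 < δ) (hδ : c₃ / c₁ ^ 2 < δ)
    (β2 μt σt2 : ℝ)
    (hβ2 : β2 = δ * c₁ ^ 2)
    (hμt : μt = Real.sqrt (β2 * (β2 - c₃) / (β2 + c₂ - c₃)))
    (hσt2 : σt2 = β2 * c₂ / (β2 + c₂ - c₃))
    (T : ℝ × ℝ → ℝ × ℝ)
    (hT : T = fun p =>
      (Real.sqrt δ * (p.1 / Real.sqrt (p.1 ^ 2 + p.2)) * c₁,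
       (p.1 ^ 2 * c₂ + p.2 * c₃) / (p.1 ^ 2 + p.2))) :
    ∀ μ σ2 : ℝ, 0 ≤ σ2 → 0 < μ ^ 2 + σ2 →
      (T (μ, σ2) = (μ, σ2) ↔
        (μ, σ2) = (0, c₃) ∨ (μ, σ2) = (μt, σt2) ∨ (μ, σ2) = (-μt, σt2)) :=
  state_evolution_fixed_points_general (mΩ := mΩ) P G Z c₁ c₂ c₃ hc₂ hc₁pos δ hδpos hδ β2 μt σt2 hβ2
    hμt hσt2 T hT
end

section
/- Let (Ω, 𝓕, P) be a probability space, let G : Ω → ℝ have the standard Gaussian law N(0,1), and let Z : Ω → ℝ be measurable and almost surely bounded. Write c₁ = E[Z G²] − E[Z], c₂ = E[Z² G²], c₃ = E[Z²], and assume c₁ > 0 and δ > c₃/c₁² for some real δ > 0. Set β̃² = δ c₁², μ̃ = √( β̃²(β̃² − c₃) / (β̃² + c₂ − c₃) ), σ̃² = β̃² c₂ / (β̃² + c₂ − c₃). Define sequences (μ_t), (σ²_t) by the recursion μ_{t+1} = √δ · (μ_t/β_t) · c₁ and σ²_{t+1} = (μ_t² c₂ + σ²_t c₃)/β_t², where β_t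 = √(μ_t² + σ²_t), from an initialization with σ²_1 > 0. If μ_1 > 0 then μ_t → μ̃ and σ²_t → σ̃² as t → ∞; if μ_1 < 0 then μ_t → −μ̃ and σ²_t → σ̃². -/
/-!
The ratio `uₜ = σ²ₜ / μₜ²` obeys the affine recursion `uₜ₊₁ = (c₃ uₜ + c₂) / β̃²`, a contraction
because `0 ≤ c₃ < β̃² = δ c₁²`, so `uₜ → c₂ / (β̃² − c₃)`. Both `μₜ₊₁² = β̃² / (1 + uₜ)` and
`σ²ₜ₊₁ = (c₂ + c₃ uₜ) / (1 + uₜ)` are continuous in `uₜ`, and the sign of `μₜ` never changes.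
The recursion is odd in `μ`, which reduces the case `μ₁ < 0` to `μ₁ > 0`.
-/

open MeasureTheory ProbabilityTheory Filter

theorem tendsto_of_affine_recurrence {a b : ℝ} {u : ℕ → ℝ} (ha : |a| < 1)
    (hu : ∀ n, u (n + 1) = a * u n + b) : Tendsto u atTop (nhds (b / (1 - a))) := by
  set L := b / (1 - a)
  have hL : a * L + b = L := by
    have : 1 - a ≠ 0 := by linarith [le_abs_self a]
    simp only [L]; field_simp; ring
  have closed : ∀ n, u n = a ^ n * (u 0 - L) + L := by
    intro n
    induction n with
    | zero => simp
    | succ n ih => rw [hu, ih, pow_succ]; linear_combination hL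
  rw [funext closed]
  simpa using ((tendsto_pow_atTop_nhds_zero_of_abs_lt_one ha).mul_const (u 0 - L)).add_const L

def IsStateEvolution (δ c₁ c₂ c₃ : ℝ) (μ σ2 : ℕ → ℝ) : Prop :=
  ∀ t : ℕ, 1 ≤ t →
    μ (t + 1) = Real.sqrt δ * (μ t / Real.sqrt ((μ t) ^ 2 + σ2 t)) * c₁ ∧
    σ2 (t + 1) = ((μ t) ^ 2 * c₂ + σ2 t * c₃) / ((μ t) ^ 2 + σ2 t)

namespace IsStateEvolution

variable {δ c₁ c₂ c₃ : ℝ} {μ σ2 : ℕ → ℝ}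

theorem neg (h : IsStateEvolution δ c₁ c₂ c₃ μ σ2) : IsStateEvolution δ c₁ c₂ c₃ (-μ) σ2 := by
  intro t ht
  obtain ⟨hμ, hσ⟩ := h t ht
  refine ⟨?_, by simp only [Pi.neg_apply, neg_sq, hσ]⟩
  simp only [Pi.neg_apply, neg_sq, hμ]
  ring

theorem pos_nonneg (h : IsStateEvolution δ c₁ c₂ c₃ μ σ2) (hδ : 0 < δ) (hc₁ : 0 < c₁)
    (hc₂ : 0 ≤ c₂) (hc₃ : 0 ≤ c₃) (hμ1 : 0 < μ 1) (hσ1 : 0 ≤ σ2 1) :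
    ∀ t, 1 ≤ t → 0 < μ t ∧ 0 ≤ σ2 t := by
  intro t ht
  induction t, ht using Nat.le_induction with
  | base => exact ⟨hμ1, hσ1⟩
  | succ t ht ih =>
    obtain ⟨hμ, hσ⟩ := ih
    have : 0 < μ t ^ 2 + σ2 t := by positivity
    rw [(h t ht).1, (h t ht).2]
    constructor <;> positivity

theorem sq_succ (h : IsStateEvolution δ c₁ c₂ c₃ μ σ2) (hδ : 0 ≤ δ) {t : ℕ} (ht : 1 ≤ t)
    (hσ : 0 ≤ σ2 t) : μ (t + 1) ^ 2 = δ * c₁ ^ 2 * μ t ^ 2 / (μ t ^ 2 + σ2 t) := by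
  rw [(h t ht).1, mul_pow, mul_pow, div_pow, Real.sq_sqrt hδ, Real.sq_sqrt (by positivity)]
  ring

theorem ratio_succ (h : IsStateEvolution δ c₁ c₂ c₃ μ σ2) (hδ : 0 < δ) (hc₁ : c₁ ≠ 0)
    {t : ℕ} (ht : 1 ≤ t) (hμ : μ t ≠ 0) (hσ : 0 ≤ σ2 t) :
    σ2 (t + 1) / μ (t + 1) ^ 2 = c₃ / (δ * c₁ ^ 2) * (σ2 t / μ t ^ 2) + c₂ / (δ * c₁ ^ 2) := by
  have : 0 < μ t ^ 2 + σ2 t := by positivity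
  rw [h.sq_succ hδ.le ht hσ, (h t ht).2]
  field_simp
  ring

theorem succ_eq_sqrt_ratio (h : IsStateEvolution δ c₁ c₂ c₃ μ σ2) (hδ : 0 ≤ δ) {t : ℕ}
    (ht : 1 ≤ t) (hμ : μ t ≠ 0) (hσ : 0 ≤ σ2 t) (hμ' : 0 ≤ μ (t + 1)) :
    μ (t + 1) = Real.sqrt (δ * c₁ ^ 2 / (1 + σ2 t / μ t ^ 2)) := by
  rw [← Real.sqrt_sq hμ', h.sq_succ hδ ht hσ]
  field_simp

theorem succ_eq_ratio (h : IsStateEvolution δ c₁ c₂ c₃ μ σ2) {t : ℕ} (ht : 1 ≤ t)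
    (hμ : μ t ≠ 0) (hσ : 0 ≤ σ2 t) :
    σ2 (t + 1) = (c₂ + c₃ * (σ2 t / μ t ^ 2)) / (1 + σ2 t / μ t ^ 2) := by
  have : 0 < μ t ^ 2 + σ2 t := by positivity
  rw [(h t ht).2]
  field_simp

theorem tendsto_ratio (h : IsStateEvolution δ c₁ c₂ c₃ μ σ2) (hc₁ : 0 < c₁) (hc₂ : 0 ≤ c₂)
    (hc₃ : 0 ≤ c₃) (hδ : c₃ < δ * c₁ ^ 2) (hμ1 : 0 < μ 1) (hσ1 : 0 ≤ σ2 1) :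
    Tendsto (fun t => σ2 t / μ t ^ 2) atTop (nhds (c₂ / (δ * c₁ ^ 2 - c₃))) := by
  have hβ2 : 0 < δ * c₁ ^ 2 := hc₃.trans_lt hδ
  have hδ0 : 0 < δ := pos_of_mul_pos_left hβ2 (sq_nonneg c₁)
  have hpos := h.pos_nonneg hδ0 hc₁ hc₂ hc₃ hμ1 hσ1
  have hL : c₂ / (δ * c₁ ^ 2) / (1 - c₃ / (δ * c₁ ^ 2)) = c₂ / (δ * c₁ ^ 2 - c₃) := by
    have : δ * c₁ ^ 2 - c₃ ≠ 0 := by linarith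
    field_simp
  rw [← tendsto_add_atTop_iff_nat 1, ← hL]
  refine tendsto_of_affine_recurrence ?_ fun n => ?_
  · rw [abs_of_nonneg (by positivity), div_lt_one hβ2]
    exact hδ
  · obtain ⟨hμ, hσ⟩ := hpos (n + 1) le_add_self
    exact h.ratio_succ hδ0 hc₁.ne' le_add_self hμ.ne' hσ

theorem tendsto_of_pos (h : IsStateEvolution δ c₁ c₂ c₃ μ σ2) (hc₁ : 0 < c₁) (hc₂ : 0 ≤ c₂)
    (hc₃ : 0 ≤ c₃) (hδ : c₃ < δ * c₁ ^ 2) (hμ1 : 0 < μ 1) (hσ1 : 0 ≤ σ2 1) :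
    Tendsto μ atTop (nhds (Real.sqrt (δ * c₁ ^ 2 * (δ * c₁ ^ 2 - c₃) /
        (δ * c₁ ^ 2 + c₂ - c₃)))) ∧
      Tendsto σ2 atTop (nhds (δ * c₁ ^ 2 * c₂ / (δ * c₁ ^ 2 + c₂ - c₃))) := by
  have hu := h.tendsto_ratio hc₁ hc₂ hc₃ hδ hμ1 hσ1
  have hδ0 : 0 < δ := pos_of_mul_pos_left (hc₃.trans_lt hδ) (sq_nonneg c₁)
  have hpos := h.pos_nonneg hδ0 hc₁ hc₂ hc₃ hμ1 hσ1
  set β2 := δ * c₁ ^ 2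
  set L := c₂ / (β2 - c₃)
  have hβc : 0 < β2 - c₃ := sub_pos.mpr hδ
  have h1L : 1 + L ≠ 0 := by positivity
  have hden : β2 + c₂ - c₃ ≠ 0 := by linarith
  have hμL : β2 / (1 + L) = β2 * (β2 - c₃) / (β2 + c₂ - c₃) := by
    simp only [L]; field_simp; ring
  have hσL : (c₂ + c₃ * L) / (1 + L) = β2 * c₂ / (β2 + c₂ - c₃) := by
    simp only [L]; field_simp; ring
  rw [← tendsto_add_atTop_iff_nat 1, ← tendsto_add_atTop_iff_nat 1 (f := σ2), ← hμL, ← hσL]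
  constructor
  · refine (tendsto_const_nhds.div (tendsto_const_nhds.add hu) h1L).sqrt.congr' ?_
    filter_upwards [eventually_ge_atTop 1] with t ht
    exact (h.succ_eq_sqrt_ratio hδ0.le ht (hpos t ht).1.ne' (hpos t ht).2
      (hpos (t + 1) le_add_self).1.le).symm
  · refine ((tendsto_const_nhds.add (tendsto_const_nhds.mul hu)).div
      (tendsto_const_nhds.add hu) h1L).congr' ?_
    filter_upwards [eventually_ge_atTop 1] with t ht
    exact (h.succ_eq_ratio ht (hpos t ht).1.ne' (hpos t ht).2).symm

end IsStateEvolution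

theorem state_evolution_convergence_general
    {Ω : Type*} {mΩ : MeasurableSpace Ω} (P : Measure Ω)
    (G Z : Ω → ℝ)
    (c₁ c₂ c₃ : ℝ)
    (hc₂ : c₂ = ∫ ω, (Z ω) ^ 2 * (G ω) ^ 2 ∂P)
    (hc₃ : c₃ = ∫ ω, (Z ω) ^ 2 ∂P)
    (hc₁pos : 0 < c₁)
    (δ : ℝ) (hδ : c₃ / c₁ ^ 2 < δ)
    (β2 μt σt2 : ℝ)
    (hβ2 : β2 = δ * c₁ ^ 2)
    (hμt : μt = Real.sqrt (β2 * (β2 - c₃) / (β2 + c₂ - c₃)))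
    (hσt2 : σt2 = β2 * c₂ / (β2 + c₂ - c₃))
    (μ σ2 : ℕ → ℝ)
    (hσ2init : 0 < σ2 1)
    (hrec : ∀ t : ℕ, 1 ≤ t →
      μ (t + 1) = Real.sqrt δ * (μ t / Real.sqrt ((μ t) ^ 2 + σ2 t)) * c₁ ∧
      σ2 (t + 1) = ((μ t) ^ 2 * c₂ + σ2 t * c₃) / ((μ t) ^ 2 + σ2 t)) :
    (0 < μ 1 →
      Tendsto μ atTop (nhds μt) ∧ Tendsto σ2 atTop (nhds σt2)) ∧
    (μ 1 < 0 →
      Tendsto μ atTop (nhds (-μt)) ∧ Tendsto σ2 atTop (nhds σt2)) := by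
  have hc₂nonneg : 0 ≤ c₂ := hc₂ ▸ integral_nonneg fun ω => by positivity
  have hc₃nonneg : 0 ≤ c₃ := hc₃ ▸ integral_nonneg fun ω => by positivity
  have hδ' : c₃ < δ * c₁ ^ 2 := (div_lt_iff₀ (by positivity)).mp hδ
  have hSE : IsStateEvolution δ c₁ c₂ c₃ μ σ2 := hrec
  subst hβ2 hμt hσt2
  refine ⟨fun hμ1 => hSE.tendsto_of_pos hc₁pos hc₂nonneg hc₃nonneg hδ' hμ1 hσ2init.le,
    fun hμ1 => ?_⟩
  have := hSE.neg.tendsto_of_pos hc₁pos hc₂nonneg hc₃nonneg hδ' (by simpa using hμ1)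
    hσ2init.le
  simpa using And.intro this.1.neg this.2

/-- Convergence of the state-evolution recursion of the GAMP algorithm with
linear denoisers: from any initialization with `σ²₁ > 0`, the iterates converge
to the nontrivial fixed point `(μ̃, σ̃²)` if `μ₁ > 0`, and to `(−μ̃, σ̃²)` if
`μ₁ < 0`. -/
theorem state_evolution_convergence
    {Ω : Type*} {mΩ : MeasurableSpace Ω} (P : Measure Ω) [IsProbabilityMeasure P]
    (G Z : Ω → ℝ) (hG : Measurable G) (hZ : Measurable Z)
    (hGlaw : Measure.map G P = gaussianReal 0 1)
    (hZbdd : ∃ M : ℝ, ∀ᵐ ω ∂P, |Z ω| ≤ M)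
    (c₁ c₂ c₃ : ℝ)
    (hc₁ : c₁ = (∫ ω, Z ω * (G ω) ^ 2 ∂P) - ∫ ω, Z ω ∂P)
    (hc₂ : c₂ = ∫ ω, (Z ω) ^ 2 * (G ω) ^ 2 ∂P)
    (hc₃ : c₃ = ∫ ω, (Z ω) ^ 2 ∂P)
    (hc₁pos : 0 < c₁)
    (δ : ℝ) (hδpos : 0 < δ) (hδ : c₃ / c₁ ^ 2 < δ)
    (β2 μt σt2 : ℝ)
    (hβ2 : β2 = δ * c₁ ^ 2)
    (hμt : μt = Real.sqrt (β2 * (β2 - c₃) / (β2 + c₂ - c₃)))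
    (hσt2 : σt2 = β2 * c₂ / (β2 + c₂ - c₃))
    (μ σ2 : ℕ → ℝ)
    (hσ2init : 0 < σ2 1)
    (hrec : ∀ t : ℕ, 1 ≤ t →
      μ (t + 1) = Real.sqrt δ * (μ t / Real.sqrt ((μ t) ^ 2 + σ2 t)) * c₁ ∧
      σ2 (t + 1) = ((μ t) ^ 2 * c₂ + σ2 t * c₃) / ((μ t) ^ 2 + σ2 t)) :
    (0 < μ 1 →
      Tendsto μ atTop (nhds μt) ∧ Tendsto σ2 atTop (nhds σt2)) ∧
    (μ 1 < 0 →
      Tendsto μ atTop (nhds (-μt)) ∧ Tendsto σ2 atTop (nhds σt2)) :=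
  state_evolution_convergence_general (mΩ := mΩ) P G Z c₁ c₂ c₃ hc₂ hc₃ hc₁pos δ hδ β2 μt σt2 hβ2
    hμt hσt2 μ σ2 hσ2init hrec
end

section
/- Let (Ω, 𝓕, P) be a probability space, let G : Ω → ℝ have the standard Gaussian law N(0,1), and let Z : Ω → ℝ be measurable and almost surely bounded, with τ = ess sup Z (so Z ≤ τ almost surely). Then on the interval (τ, ∞): (i) the function φ(λ) = λ · E[ Z G² / (λ − Z) ] is non-increasing (antitone); and (ii) for every δ > 0 the function ψ_δ(λ) = λ · ( 1/δ + E[ Z / (λ − Z) ] ) is convex. -/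
/-!
For `l > z` one has `l · a/(l - z) = a + z a/(l - z)`, which is non-increasing and convex in `l`
as soon as `z a ≥ 0`. With `z = Z ω` and `a = Z ω G(ω)²` or `a = Z ω` this holds for almost every
`ω` on all of `(τ, ∞)`, and integration preserves both properties. The integrands are integrable
because `|Z/(l - Z)| ≤ M/(l - τ)` and `G²` is integrable.
-/

open MeasureTheory ProbabilityTheory Set

lemma mul_div_sub_eq {l z a : ℝ} (h : l ≠ z) : l * (a / (l - z)) = z * a * (l - z)⁻¹ + a := by
  have : l - z ≠ 0 := sub_ne_zero.2 h
  field_simp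
  ring

lemma convexOn_inv_sub (z : ℝ) : ConvexOn ℝ (Ioi z) fun l => (l - z)⁻¹ := by
  simpa [Function.comp_def, sub_eq_add_neg] using
    (convexOn_zpow (𝕜 := ℝ) (-1)).translate_left (-z)

lemma convexOn_mul_div_sub {z a : ℝ} (ha : 0 ≤ z * a) :
    ConvexOn ℝ (Ioi z) fun l => l * (a / (l - z)) :=
  (((convexOn_inv_sub z).smul ha).add_const a).congr fun _ hl =>
    (mul_div_sub_eq (ne_of_gt hl)).symm

lemma antitoneOn_mul_div_sub {z a : ℝ} (ha : 0 ≤ z * a) :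
    AntitoneOn (fun l => l * (a / (l - z))) (Ioi z) := by
  intro x hx y hy hxy
  have : 0 < x - z := sub_pos.2 hx
  simp only [mul_div_sub_eq (ne_of_gt hx), mul_div_sub_eq (ne_of_gt hy)]
  gcongr

section ParametricIntegral

variable {α E : Type*} {mα : MeasurableSpace α} {μ : Measure α} {f : E → α → ℝ} {s : Set E}

lemma antitoneOn_integral [Preorder E] (hf : ∀ᵐ x ∂μ, AntitoneOn (f · x) s)
    (hint : ∀ l ∈ s, Integrable (f l) μ) : AntitoneOn (fun l => ∫ x, f l x ∂μ) s :=
  fun _ ha _ hb hab => integral_mono_ae (hint _ hb) (hint _ ha) (hf.mono fun _ hx => hx ha hb hab)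

lemma convexOn_integral [AddCommMonoid E] [Module ℝ E] (hs : Convex ℝ s)
    (hf : ∀ᵐ x ∂μ, ConvexOn ℝ s (f · x)) (hint : ∀ l ∈ s, Integrable (f l) μ) :
    ConvexOn ℝ s (fun l => ∫ x, f l x ∂μ) := by
  refine ⟨hs, fun a ha b hb p q hp hq hpq => ?_⟩
  have hpa := (hint a ha).const_mul p
  have hqb := (hint b hb).const_mul q
  simp only [smul_eq_mul]
  rw [← integral_const_mul, ← integral_const_mul, ← integral_add hpa hqb]
  exact integral_mono_ae (hint _ (hs ha hb hp hq hpq)) (hpa.add hqb)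
    (hf.mono fun _ hx => hx.2 ha hb hp hq hpq)

end ParametricIntegral

section BoundedRatio

variable {Ω : Type*} {mΩ : MeasurableSpace Ω} {P : Measure Ω} {Z W : Ω → ℝ} {M τ l : ℝ}

lemma ae_norm_div_sub_le (hZbdd : ∀ᵐ ω ∂P, |Z ω| ≤ M) (hZle : ∀ᵐ ω ∂P, Z ω ≤ τ) (hl : τ < l) :
    ∀ᵐ ω ∂P, ‖Z ω / (l - Z ω)‖ ≤ M / (l - τ) := by
  filter_upwards [hZbdd, hZle] with ω hM hτ
  have hpos : 0 < l - Z ω := by linarith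
  rw [Real.norm_eq_abs, abs_div, abs_of_pos hpos]
  have := (abs_nonneg (Z ω)).trans hM
  gcongr

lemma integrable_mul_div_sub (hZ : Measurable Z) (hW : Integrable W P)
    (hZbdd : ∀ᵐ ω ∂P, |Z ω| ≤ M) (hZle : ∀ᵐ ω ∂P, Z ω ≤ τ) (hl : τ < l) :
    Integrable (fun ω => Z ω * W ω / (l - Z ω)) P := by
  have hm : AEStronglyMeasurable (fun ω => Z ω / (l - Z ω)) P :=
    (hZ.div (measurable_const.sub hZ)).aestronglyMeasurable
  simpa only [mul_div_right_comm] using hW.bdd_mul hm (ae_norm_div_sub_le hZbdd hZle hl)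

end BoundedRatio

lemma integrable_sq_of_map_eq_gaussianReal {Ω : Type*} {mΩ : MeasurableSpace Ω} {P : Measure Ω}
    {G : Ω → ℝ} (hG : AEMeasurable G P) {m : ℝ} {v : NNReal}
    (hGlaw : Measure.map G P = gaussianReal m v) : Integrable (fun ω => G ω ^ 2) P := by
  have h : MemLp id 2 (P.map G) := hGlaw ▸ memLp_id_gaussianReal 2
  exact ((memLp_map_measure_iff aestronglyMeasurable_id hG).1 h).integrable_sq

theorem phi_antitone_psi_convex_general
    {Ω : Type*} {mΩ : MeasurableSpace Ω} (P : Measure Ω) [IsProbabilityMeasure P]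
    (G Z : Ω → ℝ) (hG : Measurable G) (hZ : Measurable Z)
    (hGlaw : Measure.map G P = gaussianReal 0 1)
    (hZbdd : ∃ M : ℝ, ∀ᵐ ω ∂P, |Z ω| ≤ M)
    (τ : ℝ)
    (hZle : ∀ᵐ ω ∂P, Z ω ≤ τ) :
    AntitoneOn (fun l : ℝ => l * ∫ ω, Z ω * (G ω) ^ 2 / (l - Z ω) ∂P)
      (Set.Ioi τ) ∧
    ∀ δ : ℝ, 0 < δ →
      ConvexOn ℝ (Set.Ioi τ)
        (fun l : ℝ => l * (1 / δ + ∫ ω, Z ω / (l - Z ω) ∂P)) := by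
  obtain ⟨M, hM⟩ := hZbdd
  have hGsq := integrable_sq_of_map_eq_gaussianReal hG.aemeasurable hGlaw
  have hIoi : ∀ᵐ ω ∂P, Ioi τ ⊆ Ioi (Z ω) := hZle.mono fun _ h => Ioi_subset_Ioi h
  simp_rw [mul_add, ← integral_const_mul]
  refine ⟨antitoneOn_integral ?_ fun l hl => ?_, fun δ hδ => ?_⟩
  · filter_upwards [hIoi] with ω h
    exact (antitoneOn_mul_div_sub (by nlinarith [sq_nonneg (Z ω * G ω)])).mono h
  · exact (integrable_mul_div_sub hZ hGsq hM hZle hl).const_mul l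
  · have hconv : ConvexOn ℝ (Ioi τ) fun l => ∫ ω, l * (Z ω / (l - Z ω)) ∂P := by
      refine convexOn_integral (convex_Ioi τ) ?_ fun l hl => ?_
      · filter_upwards [hIoi] with ω h
        exact (convexOn_mul_div_sub (mul_self_nonneg _)).subset h (convex_Ioi τ)
      · simpa using (integrable_mul_div_sub hZ (integrable_const 1) hM hZle hl).const_mul l
    exact (((convexOn_id (convex_Ioi τ)).smul (one_div_pos.2 hδ).le).add hconv).congr
      fun l _ => by simp [mul_comm]

/-- On the interval `(τ, ∞)` above the essential supremum `τ` of `Z`, the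
function `φ(λ) = λ·E[Z G²/(λ − Z)]` is non-increasing and, for every `δ > 0`,
the function `ψ_δ(λ) = λ·(1/δ + E[Z/(λ − Z)])` is convex. -/
theorem phi_antitone_psi_convex
    {Ω : Type*} {mΩ : MeasurableSpace Ω} (P : Measure Ω) [IsProbabilityMeasure P]
    (G Z : Ω → ℝ) (hG : Measurable G) (hZ : Measurable Z)
    (hGlaw : Measure.map G P = gaussianReal 0 1)
    (hZbdd : ∃ M : ℝ, ∀ᵐ ω ∂P, |Z ω| ≤ M)
    (τ : ℝ) (hτ : τ = essSup Z P)
    (hZle : ∀ᵐ ω ∂P, Z ω ≤ τ) :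
    AntitoneOn (fun l : ℝ => l * ∫ ω, Z ω * (G ω) ^ 2 / (l - Z ω) ∂P)
      (Set.Ioi τ) ∧
    ∀ δ : ℝ, 0 < δ →
      ConvexOn ℝ (Set.Ioi τ)
        (fun l : ℝ => l * (1 / δ + ∫ ω, Z ω / (l - Z ω) ∂P)) :=
  phi_antitone_psi_convex_general (mΩ := mΩ) P G Z hG hZ hGlaw hZbdd τ hZle
end

section
/- Let n, d ≥ 1, let A be a real n × d matrix, let D be a real diagonal n × n matrix, let m ∈ ℝ and c ∈ ℝ with c ≠ 0, let δ > 0, and set β = √δ · c. Suppose the matrix D + δc·I_n is invertible, and suppose u ∈ ℝⁿ and v ∈ ℝ^d satisfy the fixed-point equations u = (1/(√δ β)) (A v − D u) and v = Aᵀ D u − (√δ/β) m v. Then u = (D + δc·I_n)^{−1} A v and (1 + m/c) · v = Aᵀ D (D + δc·I_n)^{−1} A v; in particular, if v ≠ 0, then v is an eigenvector of the matrix Aᵀ D (D + δc·I_n)^{−1} A with eigenvalue 1 + m/c. -/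
/-!
Multiplying the first fixed-point equation by `√δ β = δc` gives `(D + δc·I) u = A v`, so
`u = (D + δc·I)⁻¹ A v`. Since `√δ/β = 1/c`, the second equation reads `(1 + m/c) v = Aᵀ D u`,
and substituting `u` yields the eigen-equation.
-/

open Matrix

namespace Matrix

variable {ι κ K : Type*} [Fintype ι] [DecidableEq ι] [Fintype κ] [CommRing K]

theorem eq_inv_mulVec_of_mulVec_eq {M : Matrix ι ι K} (hM : IsUnit M) {u w : ι → K}
    (h : M *ᵥ u = w) : u = M⁻¹ *ᵥ w := by
  rw [← h, mulVec_mulVec, nonsing_inv_mul M ((isUnit_iff_isUnit_det M).mp hM), one_mulVec]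

theorem add_smul_one_mulVec_eq_of_smul_eq_sub (D : Matrix ι ι K) (A : Matrix ι κ K) (s : K)
    {u : ι → K} {v : κ → K} (h : s • u = A *ᵥ v - D *ᵥ u) :
    (D + s • (1 : Matrix ι ι K)) *ᵥ u = A *ᵥ v := by
  rw [add_mulVec, smul_mulVec, one_mulVec, add_comm]
  exact eq_sub_iff_add_eq.mp h

/-- `hu`, `hv` are the GAMP fixed-point equations after normalization, with `s = δc` and
`μ = 1 + m/c`. -/
theorem smul_eq_mulVec_of_linear_fixed_point (A : Matrix ι κ K) (D : Matrix ι ι K) {s μ : K}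
    (hInv : IsUnit (D + s • (1 : Matrix ι ι K))) {u : ι → K} {v : κ → K}
    (hu : s • u = A *ᵥ v - D *ᵥ u) (hv : μ • v = Aᵀ *ᵥ (D *ᵥ u)) :
    u = (D + s • (1 : Matrix ι ι K))⁻¹ *ᵥ (A *ᵥ v) ∧
      μ • v = (Aᵀ * D * (D + s • (1 : Matrix ι ι K))⁻¹ * A) *ᵥ v := by
  have hu' := eq_inv_mulVec_of_mulVec_eq hInv (add_smul_one_mulVec_eq_of_smul_eq_sub D A s hu)
  refine ⟨hu', ?_⟩
  rw [hv, hu', mulVec_mulVec, mulVec_mulVec, mulVec_mulVec, Matrix.mul_assoc, Matrix.mul_assoc]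

end Matrix

theorem Module.End.hasEigenvector_toLin'_of_smul_eq_mulVec {ι K : Type*} [Fintype ι]
    [DecidableEq ι] [CommRing K] {B : Matrix ι ι K} {μ : K} {v : ι → K}
    (h : μ • v = B *ᵥ v) (hv : v ≠ 0) : Module.End.HasEigenvector (toLin' B) μ v :=
  ⟨Module.End.mem_eigenspace_iff.mpr (by rw [toLin'_apply, h]), hv⟩

theorem gamp_fixed_point_eigenvector_general (n d : ℕ)
    (A : Matrix (Fin n) (Fin d) ℝ)
    (D : Matrix (Fin n) (Fin n) ℝ)
    (m c δ : ℝ) (hc : c ≠ 0) (hδ : 0 < δ)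
    (β : ℝ) (hβ : β = Real.sqrt δ * c)
    (hInv : IsUnit (D + (δ * c) • (1 : Matrix (Fin n) (Fin n) ℝ)))
    (u : Fin n → ℝ) (v : Fin d → ℝ)
    (hu : u = (1 / (Real.sqrt δ * β)) • (A.mulVec v - D.mulVec u))
    (hv : v = Aᵀ.mulVec (D.mulVec u) - (Real.sqrt δ / β * m) • v) :
    u = (D + (δ * c) • (1 : Matrix (Fin n) (Fin n) ℝ))⁻¹.mulVec (A.mulVec v) ∧
    (1 + m / c) • v
      = (Aᵀ * D * (D + (δ * c) • (1 : Matrix (Fin n) (Fin n) ℝ))⁻¹ * A).mulVec v ∧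
    (v ≠ 0 →
      Module.End.HasEigenvector
        (Matrix.toLin' (Aᵀ * D * (D + (δ * c) • (1 : Matrix (Fin n) (Fin n) ℝ))⁻¹ * A))
        (1 + m / c) v) := by
  have hscale : Real.sqrt δ * β = δ * c := by
    rw [hβ, ← mul_assoc, Real.mul_self_sqrt hδ.le]
  have hu' : (δ * c) • u = A *ᵥ v - D *ᵥ u := by
    rw [← hscale]
    nth_rewrite 1 [hu]
    rw [smul_smul, mul_one_div_cancel (hscale ▸ mul_ne_zero hδ.ne' hc), one_smul]
  have hv' : (1 + m / c) • v = Aᵀ *ᵥ (D *ᵥ u) := by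
    have hratio : Real.sqrt δ / β * m = m / c := by
      subst hβ
      field_simp
    rw [hratio] at hv
    rw [add_smul, one_smul, eq_sub_iff_add_eq.mp hv]
  obtain ⟨hu_eq, hv_eq⟩ := smul_eq_mulVec_of_linear_fixed_point A D hInv hu' hv'
  exact ⟨hu_eq, hv_eq, Module.End.hasEigenvector_toLin'_of_smul_eq_mulVec hv_eq⟩

/-- Fixed points of the GAMP iteration with linear denoisers are eigenvectors
of the spectral matrix: if `u`, `v` satisfy the fixed-point equations
`u = (1/(√δ β))(A v − D u)` and `v = Aᵀ D u − (√δ/β) m v` with `β = √δ · c`,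
then `u = (D + δc·I)⁻¹ A v` and `(1 + m/c)·v = Aᵀ D (D + δc·I)⁻¹ A v`; in
particular, if `v ≠ 0`, then `v` is an eigenvector of
`Aᵀ D (D + δc·I)⁻¹ A` with eigenvalue `1 + m/c`. -/
theorem gamp_fixed_point_eigenvector (n d : ℕ) (hn : 1 ≤ n) (hd : 1 ≤ d)
    (A : Matrix (Fin n) (Fin d) ℝ)
    (D : Matrix (Fin n) (Fin n) ℝ) (hD : D.IsDiag)
    (m c δ : ℝ) (hc : c ≠ 0) (hδ : 0 < δ)
    (β : ℝ) (hβ : β = Real.sqrt δ * c)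
    (hInv : IsUnit (D + (δ * c) • (1 : Matrix (Fin n) (Fin n) ℝ)))
    (u : Fin n → ℝ) (v : Fin d → ℝ)
    (hu : u = (1 / (Real.sqrt δ * β)) • (A.mulVec v - D.mulVec u))
    (hv : v = Aᵀ.mulVec (D.mulVec u) - (Real.sqrt δ / β * m) • v) :
    u = (D + (δ * c) • (1 : Matrix (Fin n) (Fin n) ℝ))⁻¹.mulVec (A.mulVec v) ∧
    (1 + m / c) • v
      = (Aᵀ * D * (D + (δ * c) • (1 : Matrix (Fin n) (Fin n) ℝ))⁻¹ * A).mulVec v ∧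
    (v ≠ 0 →
      Module.End.HasEigenvector
        (Matrix.toLin' (Aᵀ * D * (D + (δ * c) • (1 : Matrix (Fin n) (Fin n) ℝ))⁻¹ * A))
        (1 + m / c) v) :=
  gamp_fixed_point_eigenvector_general n d A D m c δ hc hδ β hβ hInv u v hu hv
end
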